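/- Let m ≥ 2, let B be a real m×m matrix with Bᵀ = −B and B² = −I, and consider the symmetric control system ẋ_t = σ(x_t)a_t on ℝ^{m+1}, where σ(x) = [I_m ; (Bx_h)ᵀ] and the controls a are measurable functions with values in the closed unit ball of ℝᵐ. Let T(x₀) be the minimum time to reach the origin. Then for every x₀ = (x_{0,h},x_{0,v}) with x_{0,h} ≠ 0, T(x₀) is finite and T(x₀) ≤ U(x₀)²/|x_{0,h}|, where U(x) = (|x_h|⁴ + 4x_v²)^{1/4}. -/

import Mathlib

open Set MeasureTheory
open scoped RealInnerProductSpace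

/-- An admissible trajectory of the Hörmander-type symmetric control system
`ẋ = σ(x)a = (a, ⟪Bx_h, a⟫)`, with controls in the closed unit ball of `ℝᵐ`. -/
def IsHormTraj {m : ℕ} (B : EuclideanSpace ℝ (Fin m) →L[ℝ] EuclideanSpace ℝ (Fin m))
    (x₀ : EuclideanSpace ℝ (Fin m) × ℝ) (x : ℝ → EuclideanSpace ℝ (Fin m) × ℝ) : Prop :=
  x 0 = x₀ ∧ ContinuousOn x (Ici (0:ℝ)) ∧
    ∃ a : ℝ → EuclideanSpace ℝ (Fin m), Measurable a ∧ (∀ t, ‖a t‖ ≤ 1) ∧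
      ∀ t : ℝ, 0 ≤ t →
        x t = x₀ + ∫ s in (0:ℝ)..t,
          ((a s, ⟪B (x s).1, a s⟫) : EuclideanSpace ℝ (Fin m) × ℝ)

/-- The set of times at which the origin is reached from `x₀`. -/
def hormReachTimes {m : ℕ}
    (B : EuclideanSpace ℝ (Fin m) →L[ℝ] EuclideanSpace ℝ (Fin m))
    (x₀ : EuclideanSpace ℝ (Fin m) × ℝ) : Set ℝ :=
  {t | 0 ≤ t ∧ ∃ x : ℝ → EuclideanSpace ℝ (Fin m) × ℝ, IsHormTraj B x₀ x ∧ x t = 0}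

/-!
Since `B` is skew with `B² = -I`, for a unit vector `u` the pair `(u, B u)` is orthonormal and
`B` rotates its span by a right angle. Along a horizontal curve `x_h = p u + q B u` in that plane
the vertical equation reads `v' = p q' - q p'`, so `x_v` changes by twice the signed area swept
by `(p, q)`. From `x₀ = (r u, a)` one follows at unit speed the circular arc from `(r, 0)` to
`(0, 0)` which, with its chord, bounds the area `|a| / 2`: for radius `R` and angle `2α` this
means `r = 2 R sin α`, `|a| = R² (2α - sin 2α)`, and the time is `T = 2 R α`. An intermediate
value argument produces `α`, and the identity
`r⁴ + 4 a² - (T r)² = 16 R⁴ (sin α - α cos α)²` gives `T ≤ √(r⁴ + 4 a²) / r = U(x₀)² / r`.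
-/

open Real

local notation "E" m => EuclideanSpace ℝ (Fin m)

theorem mem_hormReachTimes_of_hasDerivAt {m : ℕ} (B : (E m) →L[ℝ] E m) {x₀ : (E m) × ℝ}
    {y : ℝ → (E m) × ℝ} {g : ℝ → E m} {T : ℝ} (hT : 0 ≤ T)
    (hy : ∀ t, HasDerivAt y (g t, ⟪B (y t).1, g t⟫) t)
    (hg : Continuous g) (hg_le : ∀ t, ‖g t‖ ≤ 1) (hy0 : y 0 = x₀) (hyT : y T = 0) :
    T ∈ hormReachTimes B x₀ := by
  set G : ℝ → (E m) × ℝ := fun s => (g s, ⟪B (y s).1, g s⟫)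
  have hyc : Continuous y := continuous_iff_continuousAt.2 fun t => (hy t).continuousAt
  have hGc : Continuous G := hg.prodMk ((B.continuous.comp (continuous_fst.comp hyc)).inner hg)
  have hftc : ∀ t, ∫ s in (0:ℝ)..t, G s = y t - x₀ := fun t => by
    rw [← hy0]; exact intervalIntegral.integral_eq_sub_of_hasDerivAt (fun s _ => hy s)
      (hGc.intervalIntegrable 0 t)
  set a : ℝ → E m := {s | s ≤ T}.indicator g
  have hF : ∀ s, ((a s, ⟪B (y (min s T)).1, a s⟫) : (E m) × ℝ) =
      {s | s ≤ T}.indicator G s := by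
    intro s
    by_cases hs : s ≤ T
    · simp [a, G, hs]
    · simp [a, hs]
  refine ⟨hT, fun t => y (min t T), ⟨by simp [min_eq_left hT, hy0],
    (hyc.comp (continuous_id.min continuous_const)).continuousOn, a,
    hg.measurable.indicator measurableSet_Iic, fun t => ?_, fun t ht => ?_⟩, by simp [hyT]⟩
  · by_cases ht : t ≤ T
    · simpa [a, ht] using hg_le t
    · simp [a, ht]
  · simp_rw [hF]
    rcases le_total t T with htT | hTt
    · rw [min_eq_left htT, intervalIntegral.integral_congr (g := G) fun s hs => ?_, hftc]
      · abel
      · rw [uIcc_of_le ht] at hs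
        exact indicator_of_mem (s := {s | s ≤ T}) (hs.2.trans htT) G
    · rw [min_eq_right hTt, intervalIntegral.integral_indicator ⟨hT, hTt⟩, hftc, hyT]
      abel

section Frame

variable {m : ℕ} {B : (E m) →L[ℝ] E m}

theorem inner_apply_self_eq_zero (hskew : ∀ v w : E m, ⟪B v, w⟫ = -⟪v, B w⟫) (v : E m) :
    ⟪B v, v⟫ = 0 := by
  have := hskew v v
  rw [real_inner_comm (B v)] at this
  linarith

theorem inner_apply_apply (hskew : ∀ v w : E m, ⟪B v, w⟫ = -⟪v, B w⟫)
    (hB2 : ∀ v, B (B v) = -v) (v w : E m) : ⟪B v, B w⟫ = ⟪v, w⟫ := by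
  rw [hskew, hB2, inner_neg_right, neg_neg]

theorem inner_smul_add_smul_apply (hskew : ∀ v w : E m, ⟪B v, w⟫ = -⟪v, B w⟫)
    (hB2 : ∀ v, B (B v) = -v) (u : E m) (p q p' q' : ℝ) :
    ⟪p • u + q • B u, p' • u + q' • B u⟫ = (p * p' + q * q') * ‖u‖ ^ 2 := by
  have h₁ : ⟪u, B u⟫ = 0 := by rw [real_inner_comm]; exact inner_apply_self_eq_zero hskew u
  have h₂ : ⟪B u, u⟫ = 0 := inner_apply_self_eq_zero hskew u
  simp only [inner_add_left, inner_add_right, real_inner_smul_left, real_inner_smul_right,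
    inner_apply_apply hskew hB2, h₁, h₂, real_inner_self_eq_norm_sq]
  ring

theorem map_smul_add_smul_apply (hB2 : ∀ v, B (B v) = -v) (u : E m) (p q : ℝ) :
    B (p • u + q • B u) = -q • u + p • B u := by
  rw [map_add, map_smul, map_smul, hB2, smul_neg, neg_smul, add_comm]

end Frame

/-- `(p, q)` are the coordinates of `x_h` in the orthonormal frame `(u, B u)`,
`u = x_{0,h} / |x_{0,h}|`, and `v = x_v`; in these coordinates the vertical equation
`v' = ⟪B x_h, x_h'⟫` becomes `v' = p q' - q p'`. -/
structure IsSteeringCurve (r a T : ℝ) (p q v : ℝ → ℝ) : Prop where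
  nonneg : 0 ≤ T
  contDiff_fst : ContDiff ℝ 1 p
  contDiff_snd : ContDiff ℝ 1 q
  differentiable_area : Differentiable ℝ v
  speed_le : ∀ t, deriv p t ^ 2 + deriv q t ^ 2 ≤ 1
  deriv_area : ∀ t, deriv v t = p t * deriv q t - q t * deriv p t
  initial : p 0 = r ∧ q 0 = 0 ∧ v 0 = a
  terminal : p T = 0 ∧ q T = 0 ∧ v T = 0

theorem mem_hormReachTimes_of_isSteeringCurve {m : ℕ} {B : (E m) →L[ℝ] E m}
    (hskew : ∀ v w : E m, ⟪B v, w⟫ = -⟪v, B w⟫) (hB2 : ∀ v, B (B v) = -v)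
    {x₀ : (E m) × ℝ} (hx : x₀.1 ≠ 0) {T : ℝ} {p q v : ℝ → ℝ}
    (h : IsSteeringCurve ‖x₀.1‖ x₀.2 T p q v) : T ∈ hormReachTimes B x₀ := by
  set u : E m := ‖x₀.1‖⁻¹ • x₀.1
  have hu : ‖u‖ = 1 := norm_smul_inv_norm hx
  have hp' := h.contDiff_fst.continuous_deriv le_rfl
  have hq' := h.contDiff_snd.continuous_deriv le_rfl
  have hdp := h.contDiff_fst.differentiable one_ne_zero
  have hdq := h.contDiff_snd.differentiable one_ne_zero
  obtain ⟨hp0, hq0, hv0⟩ := h.initial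
  obtain ⟨hpT, hqT, hvT⟩ := h.terminal
  refine mem_hormReachTimes_of_hasDerivAt B (y := fun t => (p t • u + q t • B u, v t))
    (g := fun t => deriv p t • u + deriv q t • B u) h.nonneg (fun t => ?_)
    ((hp'.smul continuous_const).add (hq'.smul continuous_const)) (fun t => ?_) ?_
    (by simp [hpT, hqT, hvT])
  · have hvt :
        deriv v t = ⟪B (p t • u + q t • B u), deriv p t • u + deriv q t • B u⟫ := by
      rw [map_smul_add_smul_apply hB2, inner_smul_add_smul_apply hskew hB2, hu, h.deriv_area]
      ring
    rw [← hvt]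
    exact (((hdp t).hasDerivAt.smul_const u).add ((hdq t).hasDerivAt.smul_const (B u))).prodMk
      (h.differentiable_area t).hasDerivAt
  · rw [← sq_le_one_iff₀ (norm_nonneg _), ← real_inner_self_eq_norm_sq,
      inner_smul_add_smul_apply hskew hB2, hu]
    simpa [sq] using h.speed_le t
  · ext
    · simp [hp0, hq0, u, smul_smul, mul_inv_cancel₀ (norm_ne_zero_iff.2 hx)]
    · exact hv0

namespace IsSteeringCurve

theorem segment {r : ℝ} (hr : 0 ≤ r) : IsSteeringCurve r 0 r (fun t => r - t) 0 0 where
  nonneg := hr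
  contDiff_fst := by fun_prop
  contDiff_snd := contDiff_const
  differentiable_area := differentiable_const 0
  speed_le t := by simp
  deriv_area t := by simp
  initial := by simp
  terminal := by simp

theorem reflect {r a T : ℝ} {p q v : ℝ → ℝ} (h : IsSteeringCurve r a T p q v) :
    IsSteeringCurve r (-a) T p (-q) (-v) where
  nonneg := h.nonneg
  contDiff_fst := h.contDiff_fst
  contDiff_snd := h.contDiff_snd.neg
  differentiable_area := h.differentiable_area.neg
  speed_le t := by simpa [deriv.neg'] using h.speed_le t
  deriv_area t := by simp [deriv.neg', h.deriv_area]; ring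
  initial := by simp [h.initial]
  terminal := by simp [h.terminal]

/-- The unit-speed arc of angle `2α` on the circle of radius `R` from `(2 R sin α, 0)` to the
origin; the area between it and its chord is `R² (2α - sin 2α) / 2`. -/
theorem arc {R α : ℝ} (hR : 0 < R) (hα : 0 ≤ α) :
    IsSteeringCurve (2 * R * sin α) (R ^ 2 * (2 * α - sin (2 * α))) (2 * R * α)
      (fun t => R * (sin α + sin (α - t / R))) (fun t => R * (cos α - cos (α - t / R)))
      (fun t => R ^ 2 * (2 * α - sin (2 * α)) + R ^ 2 * (sin (2 * α) - sin (2 * α - t / R))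
        - R * t) := by
  have hR0 : R ≠ 0 := hR.ne'
  have hθ : ∀ c t, HasDerivAt (fun t => c - t / R) (-R⁻¹) t := fun c t => by
    simpa [div_eq_mul_inv] using ((hasDerivAt_id t).mul_const R⁻¹).const_sub c
  have hp : ∀ t, HasDerivAt (fun t => R * (sin α + sin (α - t / R))) (-cos (α - t / R)) t :=
    fun t => (((hθ α t).sin.const_add (sin α)).const_mul R).congr_deriv (by field_simp)
  have hq : ∀ t, HasDerivAt (fun t => R * (cos α - cos (α - t / R))) (-sin (α - t / R)) t :=
    fun t => (((hθ α t).cos.const_sub (cos α)).const_mul R).congr_deriv (by field_simp)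
  have hv : ∀ t, HasDerivAt (fun t => R ^ 2 * (2 * α - sin (2 * α))
      + R ^ 2 * (sin (2 * α) - sin (2 * α - t / R)) - R * t)
      (R * cos (2 * α - t / R) - R) t := fun t =>
    ((((hθ (2 * α) t).sin.const_sub (sin (2 * α))).const_mul (R ^ 2)).const_add
      (R ^ 2 * (2 * α - sin (2 * α)))).sub ((hasDerivAt_id t).const_mul R) |>.congr_deriv
      (by field_simp)
  refine ⟨by positivity, by fun_prop, by fun_prop, fun t => (hv t).differentiableAt,
    fun t => ?_, fun t => ?_, ?_, ?_⟩
  · rw [(hp t).deriv, (hq t).deriv]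
    nlinarith [sin_sq_add_cos_sq (α - t / R)]
  · rw [(hp t).deriv, (hq t).deriv, (hv t).deriv,
      show 2 * α - t / R = α + (α - t / R) by ring, cos_add]
    linear_combination R * sin_sq_add_cos_sq (α - t / R)
  · simp only [sub_zero, zero_div, sub_self, mul_zero, add_zero]
    exact ⟨by ring, trivial, trivial⟩
  · have hαT : α - 2 * R * α / R = -α := by field_simp; ring
    have h2αT : 2 * α - 2 * R * α / R = 0 := by field_simp; ring
    simp only [hαT, h2αT, sin_neg, cos_neg, sin_zero]
    refine ⟨by ring, by ring, by ring⟩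

end IsSteeringCurve

theorem arc_time_mul_chord_le (R α : ℝ) :
    2 * R * α * (2 * R * sin α) ≤
      √((2 * R * sin α) ^ 4 + 4 * (R ^ 2 * (2 * α - sin (2 * α))) ^ 2) := by
  refine (le_abs_self _).trans (abs_le_sqrt ?_)
  have key : (2 * R * sin α) ^ 4 + 4 * (R ^ 2 * (2 * α - sin (2 * α))) ^ 2
      - (2 * R * α * (2 * R * sin α)) ^ 2 = 16 * R ^ 4 * (sin α - α * cos α) ^ 2 := by
    rw [sin_two_mul]
    linear_combination 16 * R ^ 4 * (sin α ^ 2 - α ^ 2) * sin_sq_add_cos_sq α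
  rw [← sub_nonneg, key]
  positivity

theorem exists_arc_angle {r a : ℝ} (hr : 0 < r) (ha : 0 < a) :
    ∃ α ∈ Ioo 0 π, r ^ 2 * (2 * α - sin (2 * α)) = 4 * a * sin α ^ 2 := by
  set A := min 1 (a / r ^ 2)
  have hA : 0 < A := lt_min one_pos (by positivity)
  have hA1 : A ≤ 1 := min_le_left _ _
  have hrA : r ^ 2 * A ≤ a := (le_div_iff₀' (by positivity)).1 (min_le_right _ _)
  have h2A : 2 * A - sin (2 * A) < 4 * A ^ 3 / 3 := by
    nlinarith [sin_gt_sub_cube (by positivity : 0 < 2 * A)]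
  have hsA : 5 * A / 6 < sin A := by
    nlinarith [sin_gt_sub_cube hA,
      mul_le_mul_of_nonneg_left (pow_le_one₀ (n := 2) hA.le hA1) hA.le]
  set φ : ℝ → ℝ := fun α => r ^ 2 * (2 * α - sin (2 * α)) - 4 * a * sin α ^ 2
  have hφA : φ A < 0 := by
    have : r ^ 2 * (2 * A - sin (2 * A)) ≤ 4 * a * A ^ 2 / 3 := by
      nlinarith [mul_le_mul_of_nonneg_right hrA (by positivity : 0 ≤ 4 * A ^ 2 / 3)]
    nlinarith [mul_lt_mul_of_pos_left (pow_lt_pow_left₀ hsA (by positivity) two_ne_zero) ha]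
  have hφπ : 0 < φ π := by simp [φ]; positivity
  obtain ⟨α, hα, hφα⟩ := intermediate_value_Ioo (hA1.trans one_le_pi_div_two |>.trans
    (by linarith [pi_pos])) (by fun_prop : Continuous φ).continuousOn ⟨hφA, hφπ⟩
  exact ⟨α, ⟨hA.trans hα.1, hα.2⟩, sub_eq_zero.1 hφα⟩

theorem exists_isSteeringCurve_of_pos {r a : ℝ} (hr : 0 < r) (ha : 0 < a) :
    ∃ T p q v, IsSteeringCurve r a T p q v ∧ T * r ≤ √(r ^ 4 + 4 * a ^ 2) := by
  obtain ⟨α, hα, harea⟩ := exists_arc_angle hr ha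
  have hs : 0 < sin α := sin_pos_of_pos_of_lt_pi hα.1 hα.2
  obtain ⟨R, rfl⟩ : ∃ R, 2 * R * sin α = r := ⟨r / (2 * sin α), by field_simp⟩
  have hRarea : R ^ 2 * (2 * α - sin (2 * α)) = a := by
    apply mul_left_cancel₀ (by positivity : 4 * sin α ^ 2 ≠ 0)
    linear_combination harea
  have hR : 0 < R := by nlinarith
  rw [← hRarea]
  exact ⟨_, _, _, _, IsSteeringCurve.arc hR hα.1.le, arc_time_mul_chord_le R α⟩

theorem exists_isSteeringCurve {r : ℝ} (hr : 0 < r) (a : ℝ) :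
    ∃ T p q v, IsSteeringCurve r a T p q v ∧ T * r ≤ √(r ^ 4 + 4 * a ^ 2) := by
  rcases lt_trichotomy a 0 with ha | rfl | ha
  · obtain ⟨T, p, q, v, h, hT⟩ := exists_isSteeringCurve_of_pos hr (neg_pos.2 ha)
    exact ⟨T, p, -q, -v, by simpa using h.reflect, by simpa using hT⟩
  · refine ⟨r, _, _, _, IsSteeringCurve.segment hr.le, ?_⟩
    rw [show r ^ 4 + 4 * 0 ^ 2 = (r ^ 2) ^ 2 by ring, sqrt_sq (by positivity), sq]
  · exact exists_isSteeringCurve_of_pos hr ha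

theorem stmt_12 {m : ℕ}
    (B : EuclideanSpace ℝ (Fin m) →L[ℝ] EuclideanSpace ℝ (Fin m))
    (hskew : ∀ v w : EuclideanSpace ℝ (Fin m), ⟪B v, w⟫ = -⟪v, B w⟫)
    (hB2 : ∀ v, B (B v) = -v)
    (U : EuclideanSpace ℝ (Fin m) × ℝ → ℝ)
    (hU : ∀ x : EuclideanSpace ℝ (Fin m) × ℝ,
      U x = (‖x.1‖ ^ 4 + 4 * x.2 ^ 2) ^ ((1:ℝ)/4)) :
    ∀ x₀ : EuclideanSpace ℝ (Fin m) × ℝ, x₀.1 ≠ 0 →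
      (hormReachTimes B x₀).Nonempty ∧
      sInf (hormReachTimes B x₀) ≤ (U x₀) ^ 2 / ‖x₀.1‖ := by
  intro x₀ hx
  have hr : 0 < ‖x₀.1‖ := norm_pos_iff.2 hx
  have hU2 : U x₀ ^ 2 = √(‖x₀.1‖ ^ 4 + 4 * x₀.2 ^ 2) := by
    rw [hU, sqrt_eq_rpow, ← rpow_natCast, ← rpow_mul (by positivity)]
    norm_num
  obtain ⟨T, p, q, v, h, hT⟩ := exists_isSteeringCurve hr x₀.2
  have hmem := mem_hormReachTimes_of_isSteeringCurve hskew hB2 hx h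
  refine ⟨⟨T, hmem⟩, (csInf_le ⟨0, fun _ ht => ht.1⟩ hmem).trans ?_⟩
  rwa [hU2, le_div_iff₀ hr]
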